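/- arXiv:2312.15046 — 6 statements merged into one kernel-verified Lean document; each statement's English description precedes it below -/
import Mathlib

section
/- Let D ≥ 1, μ ∈ ℝ^D, let Λ be a symmetric positive definite D×D real matrix, and let α > 0, β > 0. Then for every θ ∈ ℝ^D, the marginal of the Normal-Gamma density over τ is a multivariate location-scale Student-t density: ∫₀^∞ NG(θ, τ; μ, Λ, α, β) dτ = T_D(θ; 2α, μ, (β/α)·Λ⁻¹). -/
/-!
For fixed `θ`, the Normal-Gamma density is, as a function of `τ`, a constant times
`τ ^ (α + D/2 - 1) * exp (-(β + q/2) τ)` with `q = (θ - μ)ᵀ Λ (θ - μ)`, so the Gamma integral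
gives `Γ(α + D/2) / (β + q/2) ^ (α + D/2)`. Factoring `β` out of `β + q/2` produces the Student-t
kernel `(1 + q/(2β)) ^ (-(α + D/2))`, and since `((β/α) Λ⁻¹)⁻¹ = (α/β) Λ` the remaining constants
are those of `T_D(θ; 2α, μ, (β/α) Λ⁻¹)`.
-/

open Real MeasureTheory Matrix

/-- Univariate Gaussian density `N(y; m, v)` with mean `m`, variance `v`. -/
noncomputable def gauss1 (y m v : ℝ) : ℝ :=
  (2 * π * v) ^ (-(1 : ℝ) / 2) * Real.exp (-((y - m) ^ 2) / (2 * v))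

/-- Multivariate Gaussian density in precision form: `N(θ; μ, P⁻¹)` with precision matrix `P`. -/
noncomputable def gaussND {ι : Type*} [Fintype ι] [DecidableEq ι]
    (θ μ : ι → ℝ) (P : Matrix ι ι ℝ) : ℝ :=
  (2 * π) ^ (-(Fintype.card ι : ℝ) / 2) * P.det ^ ((1 : ℝ) / 2) *
    Real.exp (-(1 / 2) * ((θ - μ) ⬝ᵥ (P *ᵥ (θ - μ))))

/-- Gamma density `G(τ; α, β)` with shape `α` and rate `β`. -/
noncomputable def gammaPdf (τ α β : ℝ) : ℝ :=
  β ^ α / Real.Gamma α * τ ^ (α - 1) * Real.exp (-β * τ)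

/-- Normal-Gamma density `NG(θ, τ; μ, Λ, α, β) = N(θ; μ, (τΛ)⁻¹) · G(τ; α, β)`. -/
noncomputable def normalGamma {ι : Type*} [Fintype ι] [DecidableEq ι]
    (θ : ι → ℝ) (τ : ℝ) (μ : ι → ℝ) (Λ : Matrix ι ι ℝ) (α β : ℝ) : ℝ :=
  gaussND θ μ (τ • Λ) * gammaPdf τ α β

/-- Location-scale Student-t density `T(y; ν, m, s²)`. -/
noncomputable def studentT (y ν m s2 : ℝ) : ℝ :=
  Real.Gamma ((ν + 1) / 2) / (Real.sqrt (π * ν * s2) * Real.Gamma (ν / 2)) *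
    (1 + (y - m) ^ 2 / (ν * s2)) ^ (-((ν + 1) / 2))

/-- Multivariate location-scale Student-t density `T_D(θ; ν, μ, Σ)`. -/
noncomputable def multiStudentT {ι : Type*} [Fintype ι] [DecidableEq ι]
    (θ : ι → ℝ) (ν : ℝ) (μ : ι → ℝ) (S : Matrix ι ι ℝ) : ℝ :=
  Real.Gamma ((ν + Fintype.card ι) / 2) /
      (Real.Gamma (ν / 2) * (ν * π) ^ ((Fintype.card ι : ℝ) / 2) * S.det ^ ((1 : ℝ) / 2)) *
    (1 + (θ - μ) ⬝ᵥ (S⁻¹ *ᵥ (θ - μ)) / ν) ^ (-((ν + Fintype.card ι) / 2))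

/-- The digamma function: the derivative of `ln ∘ Γ`. -/
noncomputable def digamma (x : ℝ) : ℝ := deriv (fun t => Real.log (Real.Gamma t)) x

/-- The Beta function `B(a, b) = Γ(a)Γ(b)/Γ(a+b)`. -/
noncomputable def betaFn (a b : ℝ) : ℝ := Real.Gamma a * Real.Gamma b / Real.Gamma (a + b)

section

variable {ι : Type*} [Fintype ι] [DecidableEq ι]

lemma gaussND_smul (θ μ : ι → ℝ) {P : Matrix ι ι ℝ} (hP : 0 ≤ P.det) {τ : ℝ} (hτ : 0 < τ) :
    gaussND θ μ (τ • P) =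
      (2 * π) ^ (-(Fintype.card ι : ℝ) / 2) * P.det ^ ((1 : ℝ) / 2) *
        (τ ^ ((Fintype.card ι : ℝ) / 2) *
          Real.exp (-((θ - μ) ⬝ᵥ (P *ᵥ (θ - μ)) / 2 * τ))) := by
  rw [gaussND, det_smul, mul_rpow (by positivity) hP, ← rpow_natCast, ← rpow_mul hτ.le,
    smul_mulVec, dotProduct_smul, smul_eq_mul]
  ring_nf

lemma integral_rpow_mul_exp_mul_gammaPdf {α β k c : ℝ} (hs : 0 < α + k) (hr : 0 < β + c) :
    ∫ τ in Set.Ioi (0 : ℝ), τ ^ k * Real.exp (-(c * τ)) * gammaPdf τ α β =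
      β ^ α / Real.Gamma α * ((1 / (β + c)) ^ (α + k) * Real.Gamma (α + k)) := by
  rw [← integral_rpow_mul_exp_neg_mul_Ioi hs hr, ← integral_const_mul]
  refine setIntegral_congr_fun measurableSet_Ioi fun τ (hτ : 0 < τ) => ?_
  rw [gammaPdf, show α + k - 1 = k + (α - 1) by ring, rpow_add hτ,
    show -((β + c) * τ) = -(c * τ) + -β * τ by ring, Real.exp_add]
  ring

lemma smul_inv_inv {K : Type*} [Field K] {A : Matrix ι ι K} (hA : IsUnit A.det) {c : K}
    (hc : c ≠ 0) : (c • A⁻¹)⁻¹ = c⁻¹ • A := by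
  refine inv_eq_right_inv ?_
  rw [smul_mul, Matrix.mul_smul, smul_smul, nonsing_inv_mul A hA, mul_inv_cancel₀ hc, one_smul]

lemma det_smul_inv {K : Type*} [Field K] (A : Matrix ι ι K) (c : K) :
    (c • A⁻¹).det = c ^ Fintype.card ι * A.det⁻¹ := by
  rw [det_smul, det_nonsing_inv, Ring.inverse_eq_inv]

end

lemma gaussConst_mul_gammaIntegral_eq_studentT {n : ℕ} {α β d q : ℝ} (hα : 0 < α) (hβ : 0 < β)
    (hd : 0 < d) (hq : 0 ≤ q) :
    (2 * π) ^ (-(n : ℝ) / 2) * d ^ ((1 : ℝ) / 2) *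
        (β ^ α / Real.Gamma α * ((1 / (β + q / 2)) ^ (α + n / 2) * Real.Gamma (α + n / 2))) =
      Real.Gamma (α + n / 2) /
          (Real.Gamma α * (2 * α * π) ^ ((n : ℝ) / 2) * ((β / α) ^ n * d⁻¹) ^ ((1 : ℝ) / 2)) *
        (1 + q / (2 * β)) ^ (-(α + n / 2)) := by
  have hc : 0 < β + q / 2 := by positivity
  have hkernel : 1 + q / (2 * β) = (β + q / 2) / β := by field_simp
  have hscale : ((β / α) ^ n * d⁻¹) ^ ((1 : ℝ) / 2) =
      β ^ ((n : ℝ) / 2) / α ^ ((n : ℝ) / 2) / d ^ ((1 : ℝ) / 2) := by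
    rw [← rpow_natCast, mul_rpow (by positivity) (by positivity), ← rpow_mul (by positivity),
      inv_rpow hd.le, div_rpow hβ.le hα.le, div_eq_mul_inv]
    ring_nf
  rw [hkernel, hscale, rpow_neg (by positivity), div_rpow hc.le hβ.le, inv_div,
    div_rpow zero_le_one hc.le, one_rpow, rpow_add hβ, neg_div, rpow_neg (by positivity),
    mul_rpow two_pos.le pi_pos.le, mul_rpow (by positivity : (0 : ℝ) ≤ 2 * α) pi_pos.le,
    mul_rpow two_pos.le hα.le]
  have hΓ := Real.Gamma_pos_of_pos hα
  field_simp

theorem normalGamma_marginal_theta_general (D : ℕ) (μ : Fin D → ℝ)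
    (Λ : Matrix (Fin D) (Fin D) ℝ) (hΛ : Λ.PosDef) (α β : ℝ) (hα : 0 < α) (hβ : 0 < β)
    (θ : Fin D → ℝ) :
    ∫ τ in Set.Ioi (0 : ℝ), normalGamma θ τ μ Λ α β =
      multiStudentT θ (2 * α) μ ((β / α) • Λ⁻¹) := by
  set q := (θ - μ) ⬝ᵥ (Λ *ᵥ (θ - μ)) with hq_def
  have hq : 0 ≤ q := by
    simpa only [star_trivial] using hΛ.posSemidef.dotProduct_mulVec_nonneg (θ - μ)
  have hdet : 0 < Λ.det := hΛ.det_pos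
  have hquad : (θ - μ) ⬝ᵥ (((β / α) • Λ⁻¹)⁻¹ *ᵥ (θ - μ)) / (2 * α) = q / (2 * β) := by
    rw [smul_inv_inv hdet.ne'.isUnit (by positivity), smul_mulVec, dotProduct_smul,
      smul_eq_mul, ← hq_def]
    field_simp
  calc ∫ τ in Set.Ioi (0 : ℝ), normalGamma θ τ μ Λ α β
      = ∫ τ in Set.Ioi (0 : ℝ), (2 * π) ^ (-(D : ℝ) / 2) * Λ.det ^ ((1 : ℝ) / 2) *
          (τ ^ ((D : ℝ) / 2) * Real.exp (-(q / 2 * τ)) * gammaPdf τ α β) :=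
        setIntegral_congr_fun measurableSet_Ioi fun τ (hτ : 0 < τ) => by
          rw [normalGamma, gaussND_smul θ μ hdet.le hτ, Fintype.card_fin, mul_assoc]
    _ = multiStudentT θ (2 * α) μ ((β / α) • Λ⁻¹) := by
      rw [integral_const_mul, integral_rpow_mul_exp_mul_gammaPdf (by positivity) (by positivity),
        multiStudentT, Fintype.card_fin, hquad, det_smul_inv, Fintype.card_fin,
        show (2 * α + D) / 2 = α + D / 2 by ring, show 2 * α / 2 = α by ring,
        gaussConst_mul_gammaIntegral_eq_studentT hα hβ hdet hq]

/-- marginalizing the Normal-Gamma density over the precision τ yields a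
multivariate location-scale Student-t density. -/
theorem normalGamma_marginal_theta (D : ℕ) (hD : 1 ≤ D) (μ : Fin D → ℝ)
    (Λ : Matrix (Fin D) (Fin D) ℝ) (hΛ : Λ.PosDef) (α β : ℝ) (hα : 0 < α) (hβ : 0 < β)
    (θ : Fin D → ℝ) :
    ∫ τ in Set.Ioi (0 : ℝ), normalGamma θ τ μ Λ α β =
      multiStudentT θ (2 * α) μ ((β / α) • Λ⁻¹) :=
  normalGamma_marginal_theta_general D μ Λ hΛ α β hα hβ θ
end

section
/- Let D ≥ 1, φ, μ ∈ ℝ^D, let Λ be a symmetric positive definite D×D real matrix, and let τ > 0. Let M be the (D+1)×(D+1) block matrix M = [[Λ⁻¹, Λ⁻¹φ], [φᵀΛ⁻¹, φᵀΛ⁻¹φ + 1]]. Then M is symmetric positive definite (hence invertible with Λ̄ = M⁻¹ symmetric positive definite), and for all θ ∈ ℝ^D and y ∈ ℝ: N(y; θᵀφ, τ⁻¹) · N_D(θ; μ, (τΛ)⁻¹) = N_{D+1}((θ, y); (μ, μᵀφ), (τΛ̄)⁻¹), i.e., the product equals the (D+1)-dimensional Gaussian density with mean (μ, μᵀφ)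 and precision matrix τΛ̄. -/
open Real MeasureTheory Matrix

/-- the product of the NARX Gaussian likelihood and the conditionally Gaussian
prior on θ is a joint (D+1)-dimensional Gaussian density. -/
theorem likelihood_mul_prior_eq_joint_gaussian (D : ℕ) (hD : 1 ≤ D) (φ μ : Fin D → ℝ)
    (Λ : Matrix (Fin D) (Fin D) ℝ) (hΛ : Λ.PosDef) (τ : ℝ) (hτ : 0 < τ) :
    let M : Matrix (Fin D ⊕ Fin 1) (Fin D ⊕ Fin 1) ℝ :=
      fromBlocks Λ⁻¹ (Matrix.replicateCol (Fin 1) (Λ⁻¹ *ᵥ φ)) (Matrix.replicateRow (Fin 1) (φ ᵥ* Λ⁻¹))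
        (Matrix.of fun _ _ => φ ⬝ᵥ (Λ⁻¹ *ᵥ φ) + 1)
    M.PosDef ∧ M⁻¹.PosDef ∧
      ∀ (θ : Fin D → ℝ) (y : ℝ),
        gauss1 y (θ ⬝ᵥ φ) τ⁻¹ * gaussND θ μ (τ • Λ) =
          gaussND (Sum.elim θ (fun _ => y)) (Sum.elim μ (fun _ => μ ⬝ᵥ φ)) (τ • M⁻¹) := by
  intro M
  have hΛdet : Λ.det ≠ 0 := hΛ.det_pos.ne'
  have hinv : Λ⁻¹ * Λ = 1 := Matrix.nonsing_inv_mul Λ hΛdet.isUnit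
  set Cφ := Matrix.replicateCol (Fin 1) φ with hCφ
  set Rφ := Matrix.replicateRow (Fin 1) φ with hRφ
  set P : Matrix (Fin D ⊕ Fin 1) (Fin D ⊕ Fin 1) ℝ :=
    fromBlocks (Λ + Cφ * Rφ) (-Cφ) (-Rφ) 1 with hPdef
  have hD22 : (Matrix.of fun (_ _ : Fin 1) => φ ⬝ᵥ (Λ⁻¹ *ᵥ φ) + 1) = Rφ * Λ⁻¹ * Cφ + 1 := by
    ext i j
    rw [Subsingleton.elim i j]
    simp only [Matrix.of_apply, Matrix.add_apply, Matrix.mul_apply, Matrix.one_apply_eq,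
      hCφ, hRφ, Matrix.replicateCol_apply, Matrix.replicateRow_apply, Matrix.mulVec, dotProduct]
    congr 1
    simp only [Finset.mul_sum, Finset.sum_mul]
    rw [Finset.sum_comm]
    exact Finset.sum_congr rfl fun _ _ => Finset.sum_congr rfl fun _ _ => by ring
  have hM : (fromBlocks Λ⁻¹ (Matrix.replicateCol (Fin 1) (Λ⁻¹ *ᵥ φ)) (Matrix.replicateRow (Fin 1) (φ ᵥ* Λ⁻¹))
        (Matrix.of fun _ _ => φ ⬝ᵥ (Λ⁻¹ *ᵥ φ) + 1))
      = fromBlocks Λ⁻¹ (Λ⁻¹ * Cφ) (Rφ * Λ⁻¹) (Rφ * Λ⁻¹ * Cφ + 1) := by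
    rw [Matrix.replicateCol_mulVec, Matrix.replicateRow_vecMul, hD22]
  have e11 : Λ⁻¹ * (Λ + Cφ * Rφ) + (Λ⁻¹ * Cφ) * (-Rφ) = 1 := by
    rw [Matrix.mul_add, hinv, Matrix.mul_neg, Matrix.mul_assoc]; abel
  have e12 : Λ⁻¹ * (-Cφ) + (Λ⁻¹ * Cφ) * (1 : Matrix (Fin 1) (Fin 1) ℝ) = 0 := by
    rw [Matrix.mul_neg, Matrix.mul_one]; abel
  have e21 : (Rφ * Λ⁻¹) * (Λ + Cφ * Rφ) + (Rφ * Λ⁻¹ * Cφ + 1) * (-Rφ) = 0 := by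
    rw [Matrix.mul_add, Matrix.mul_assoc Rφ Λ⁻¹ Λ, hinv, Matrix.mul_one, Matrix.mul_neg,
      Matrix.add_mul, Matrix.one_mul, ← Matrix.mul_assoc (Rφ * Λ⁻¹) Cφ Rφ]
    abel
  have e22 : (Rφ * Λ⁻¹) * (-Cφ) + (Rφ * Λ⁻¹ * Cφ + 1) * (1 : Matrix (Fin 1) (Fin 1) ℝ) = 1 := by
    rw [Matrix.mul_neg, Matrix.mul_one]; abel
  have hMP : fromBlocks Λ⁻¹ (Λ⁻¹ * Cφ) (Rφ * Λ⁻¹) (Rφ * Λ⁻¹ * Cφ + 1) * P = 1 := by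
    rw [hPdef, fromBlocks_multiply, e11, e12, e21, e22, fromBlocks_one]
  have hPM : P * fromBlocks Λ⁻¹ (Λ⁻¹ * Cφ) (Rφ * Λ⁻¹) (Rφ * Λ⁻¹ * Cφ + 1) = 1 :=
    mul_eq_one_comm.mp hMP
  have hvd : ∀ (a b : Fin 1 → ℝ), a ⬝ᵥ b = a 0 * b 0 := by
    intro a b; simp [dotProduct]
  have hCv : ∀ w : Fin 1 → ℝ, Cφ *ᵥ w = w 0 • φ := by
    intro w; ext i; simp [hCφ, Matrix.mulVec, dotProduct, mul_comm]
  have quad : ∀ (u : Fin D → ℝ) (v : Fin 1 → ℝ),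
      Sum.elim u v ⬝ᵥ (P *ᵥ Sum.elim u v) = u ⬝ᵥ (Λ *ᵥ u) + (v 0 - φ ⬝ᵥ u) ^ 2 := by
    intro u v
    have hRu : Rφ *ᵥ u = fun _ => φ ⬝ᵥ u := by
      ext i; simp [hRφ, Matrix.mulVec, dotProduct]
    rw [hPdef, fromBlocks_mulVec]
    simp only [Sum.elim_comp_inl, Sum.elim_comp_inr]
    rw [sumElim_dotProduct_sumElim,
      Matrix.add_mulVec, Matrix.neg_mulVec, Matrix.neg_mulVec, Matrix.one_mulVec,
      ← Matrix.mulVec_mulVec, hRu, hCv, hCv,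
      dotProduct_add, dotProduct_add, dotProduct_neg,
      dotProduct_smul, dotProduct_smul,
      dotProduct_comm u φ, hvd]
    simp only [Pi.add_apply, Pi.neg_apply, smul_eq_mul]
    ring
  have hPsym : P.IsHermitian := by
    ext i j
    cases i <;> cases j <;>
      simp [hPdef, Matrix.conjTranspose_apply, fromBlocks, hCφ, hRφ, Matrix.mul_apply,
        Matrix.one_apply, mul_comm, hΛ.isHermitian.apply, eq_comm] <;>
      exact (hΛ.isHermitian.apply _ _).symm
  have hP : P.PosDef := by
    refine Matrix.PosDef.of_dotProduct_mulVec_pos hPsym fun x hx => ?_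
    have hxe : x = Sum.elim (x ∘ Sum.inl) (x ∘ Sum.inr) := by funext i; cases i <;> rfl
    rw [show star x = x from funext fun i => star_trivial _]
    have key := quad (x ∘ Sum.inl) (x ∘ Sum.inr)
    rw [← hxe] at key
    rw [key]
    by_cases hu : x ∘ Sum.inl = 0
    · have hv : x (Sum.inr 0) ≠ 0 := by
        intro h0
        apply hx
        funext i
        cases i with
        | inl i => exact congrFun hu i
        | inr i => rw [Subsingleton.elim i 0]; exact h0
      rw [hu]
      simp only [Matrix.mulVec_zero, dotProduct_zero, zero_dotProduct,
        zero_add, Function.comp_apply, sub_zero]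
      positivity
    · have h1 := hΛ.dotProduct_mulVec_pos hu
      rw [show star (x ∘ Sum.inl) = x ∘ Sum.inl from funext fun i => star_trivial _] at h1
      have h2 := sq_nonneg ((x ∘ Sum.inr) 0 - φ ⬝ᵥ (x ∘ Sum.inl))
      linarith
  have hdetP : P.det = Λ.det := by
    rw [hPdef, Matrix.det_fromBlocks_one₂₂, Matrix.neg_mul, Matrix.mul_neg, neg_neg,
      add_sub_cancel_right]
  have hMeq : M = fromBlocks Λ⁻¹ (Λ⁻¹ * Cφ) (Rφ * Λ⁻¹) (Rφ * Λ⁻¹ * Cφ + 1) := hM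
  have hMinv : M⁻¹ = P := by rw [hMeq]; exact Matrix.inv_eq_right_inv hMP
  have hPinv : P⁻¹ = M := by rw [hMeq]; exact Matrix.inv_eq_right_inv hPM
  have hd : (0:ℝ) < Λ.det := hΛ.det_pos
  refine ⟨hPinv ▸ hP.inv, hMinv ▸ hP, fun θ y => ?_⟩
  rw [hMinv]
  simp only [gauss1, gaussND, Fintype.card_sum, Fintype.card_fin]
  have hdiff : Sum.elim θ (fun _ : Fin 1 => y) - Sum.elim μ (fun _ : Fin 1 => μ ⬝ᵥ φ)
      = Sum.elim (θ - μ) (fun _ : Fin 1 => y - μ ⬝ᵥ φ) := by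
    funext i; cases i <;> simp
  rw [hdiff]
  have hquadR : Sum.elim (θ - μ) (fun _ : Fin 1 => y - μ ⬝ᵥ φ) ⬝ᵥ
        ((τ • P) *ᵥ Sum.elim (θ - μ) (fun _ : Fin 1 => y - μ ⬝ᵥ φ))
      = τ * ((θ - μ) ⬝ᵥ (Λ *ᵥ (θ - μ)) + (y - θ ⬝ᵥ φ) ^ 2) := by
    rw [Matrix.smul_mulVec, dotProduct_smul, quad, smul_eq_mul]
    have h5 : φ ⬝ᵥ (θ - μ) = θ ⬝ᵥ φ - μ ⬝ᵥ φ := by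
      rw [dotProduct_sub, dotProduct_comm φ θ, dotProduct_comm φ μ]
    rw [h5]; ring_nf
  have hquadL : (θ - μ) ⬝ᵥ ((τ • Λ) *ᵥ (θ - μ)) = τ * ((θ - μ) ⬝ᵥ (Λ *ᵥ (θ - μ))) := by
    rw [Matrix.smul_mulVec, dotProduct_smul, smul_eq_mul]
  rw [hquadR, hquadL]
  have hdΛ : (τ • Λ).det = τ ^ D * Λ.det := by
    rw [Matrix.det_smul, Fintype.card_fin]
  have hdP : (τ • P).det = τ ^ (D + 1) * Λ.det := by
    rw [Matrix.det_smul, hdetP, Fintype.card_sum, Fintype.card_fin, Fintype.card_fin]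
  rw [hdΛ, hdP]
  have h2π : (0:ℝ) < 2 * π := by positivity
  have e1 : (2 * π * τ⁻¹ : ℝ) ^ (-(1:ℝ)/2) = (2*π) ^ (-(1:ℝ)/2) * τ ^ ((1:ℝ)/2) := by
    rw [Real.mul_rpow h2π.le (by positivity), ← Real.rpow_neg_one τ, ← Real.rpow_mul hτ.le]
    norm_num
  have e2 : (2*π) ^ (-(1:ℝ)/2) * (2*π) ^ (-(D:ℝ)/2) = (2*π) ^ (-((D:ℝ)+1)/2) := by
    rw [← Real.rpow_add h2π]; ring_nf
  have e3 : τ ^ ((1:ℝ)/2) * ((τ ^ D * Λ.det) ^ ((1:ℝ)/2))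
      = (τ ^ (D+1) * Λ.det) ^ ((1:ℝ)/2) := by
    rw [Real.mul_rpow (by positivity) hd.le, Real.mul_rpow (by positivity) hd.le, ← mul_assoc]
    congr 1
    rw [← Real.rpow_natCast τ D, ← Real.rpow_natCast τ (D+1),
      ← Real.rpow_mul hτ.le, ← Real.rpow_mul hτ.le, ← Real.rpow_add hτ]
    push_cast; ring_nf
  have e4 : Real.exp (-((y - θ ⬝ᵥ φ) ^ 2) / (2 * τ⁻¹))
      = Real.exp (-(1/2) * (τ * (y - θ ⬝ᵥ φ) ^ 2)) := by
    congr 1; field_simp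
  rw [e1, e4]
  have ecast : (-(↑(D+1):ℝ)/2) = (-((D:ℝ)+1)/2) := by push_cast; ring
  rw [ecast, ← e2, ← e3,
    show τ * ((θ - μ) ⬝ᵥ (Λ *ᵥ (θ - μ)) + (y - θ ⬝ᵥ φ) ^ 2)
        = τ * (y - θ ⬝ᵥ φ) ^ 2 + τ * ((θ - μ) ⬝ᵥ (Λ *ᵥ (θ - μ))) from by ring,
    mul_add (-(1/2) : ℝ), Real.exp_add]
  ring
end

section
/- Let m ∈ ℝ, λ > 0, α > 0, β > 0. Then for every y ∈ ℝ, the Gamma mixture of Gaussian densities is a location-scale Student-t density: ∫₀^∞ N(y; m, (τλ)⁻¹) · G(τ; α, β) dτ = T(y; 2α, m, β/(αλ)). -/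
open Real MeasureTheory Matrix

/-!
Written in terms of the precision `τλ`, the Gaussian factor is `√(τλ/2π) · exp(-τλ(y-m)²/2)`, so
the integrand is a constant times `τ^(α+1/2-1) · exp(-cτ)` with `c = β + λ(y-m)²/2`: an
unnormalised Gamma density, whose integral is `Γ(α+1/2) · c^(-(α+1/2))`. Since
`c = β · (1 + (y-m)² / (2α · β/(αλ)))`, this is the Student-t density with `2α` degrees of freedom.
-/

lemma gauss1_inv (y m : ℝ) {p : ℝ} (hp : 0 < p) :
    gauss1 y m p⁻¹ = √(p / (2 * π)) * exp (-(p * (y - m) ^ 2 / 2)) := by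
  have hvar : 2 * π * p⁻¹ = (p / (2 * π))⁻¹ := by field_simp
  rw [gauss1, hvar, show -(1 : ℝ) / 2 = -(1 / 2) by ring, rpow_neg (by positivity),
    inv_rpow (by positivity), inv_inv, ← sqrt_eq_rpow]
  congr 2
  field_simp

lemma gauss1_inv_mul_gammaPdf (y m α β : ℝ) {lam τ : ℝ} (hlam : 0 < lam) (hτ : 0 < τ) :
    gauss1 y m (τ * lam)⁻¹ * gammaPdf τ α β =
      √(lam / (2 * π)) * (β ^ α / Gamma α) *
        (τ ^ (α + 1 / 2 - 1) * exp (-((β + lam * (y - m) ^ 2 / 2) * τ))) := by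
  have hsqrt : √(τ * lam / (2 * π)) = √(lam / (2 * π)) * τ ^ (1 / 2 : ℝ) := by
    rw [mul_div_assoc, sqrt_mul hτ.le, sqrt_eq_rpow, mul_comm]
  have hpow : τ ^ (1 / 2 : ℝ) * τ ^ (α - 1) = τ ^ (α + 1 / 2 - 1) := by
    rw [← rpow_add hτ]
    ring_nf
  have hexp : exp (-(τ * lam * (y - m) ^ 2 / 2)) * exp (-β * τ) =
      exp (-((β + lam * (y - m) ^ 2 / 2) * τ)) := by
    rw [← exp_add]
    ring_nf
  rw [gauss1_inv y m (by positivity), gammaPdf, hsqrt, ← hpow, ← hexp]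
  ring

theorem integral_gauss1_inv_mul_gammaPdf (y m : ℝ) {lam α β : ℝ} (hlam : 0 < lam)
    (hα : 0 < α + 1 / 2) (hβ : 0 < β) :
    ∫ τ in Set.Ioi (0 : ℝ), gauss1 y m (τ * lam)⁻¹ * gammaPdf τ α β =
      √(lam / (2 * π)) * (β ^ α / Gamma α) *
        ((β + lam * (y - m) ^ 2 / 2) ^ (-(α + 1 / 2)) * Gamma (α + 1 / 2)) := by
  have hc : 0 < β + lam * (y - m) ^ 2 / 2 := by positivity
  rw [setIntegral_congr_fun measurableSet_Ioi fun τ hτ ↦ gauss1_inv_mul_gammaPdf y m α β hlam hτ,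
    integral_const_mul, integral_rpow_mul_exp_neg_mul_Ioi hα hc, one_div, inv_rpow hc.le,
    ← rpow_neg hc.le]

lemma studentT_two_mul (y m : ℝ) {lam α β : ℝ} (hlam : 0 < lam) (hα : 0 < α) (hβ : 0 < β) :
    studentT y (2 * α) m (β / (α * lam)) =
      √(lam / (2 * π)) * (β ^ α / Gamma α) *
        ((β + lam * (y - m) ^ 2 / 2) ^ (-(α + 1 / 2)) * Gamma (α + 1 / 2)) := by
  have hscale : π * (2 * α) * (β / (α * lam)) = (lam / (2 * π))⁻¹ * β := by
    field_simp
  have hbase : 1 + (y - m) ^ 2 / (2 * α * (β / (α * lam))) =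
      β⁻¹ * (β + lam * (y - m) ^ 2 / 2) := by
    field_simp
  have hβpow : β ^ (α + 1 / 2) = β ^ α * √β := by
    rw [sqrt_eq_rpow, rpow_add hβ]
  rw [studentT, hscale, hbase, show (2 * α + 1) / 2 = α + 1 / 2 by ring,
    show 2 * α / 2 = α by ring, sqrt_mul (by positivity), sqrt_inv,
    mul_rpow (by positivity) (by positivity), inv_rpow hβ.le, ← rpow_neg hβ.le, neg_neg, hβpow]
  have hG : Gamma α ≠ 0 := (Gamma_pos_of_pos hα).ne'
  field_simp

/-- a Gamma mixture of Gaussian densities is a location-scale Student-t density. -/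
theorem gamma_mixture_of_gaussians (m lam α β : ℝ) (hlam : 0 < lam)
    (hα : 0 < α) (hβ : 0 < β) (y : ℝ) :
    ∫ τ in Set.Ioi (0 : ℝ), gauss1 y m (τ * lam)⁻¹ * gammaPdf τ α β =
      studentT y (2 * α) m (β / (α * lam)) := by
  rw [integral_gauss1_inv_mul_gammaPdf y m hlam (by linarith) hβ, studentT_two_mul y m hlam hα hβ]
end

section
/- Let D ≥ 1, φ, μ ∈ ℝ^D, let Λ be a symmetric positive definite D×D real matrix, and let α > 0, β > 0. Then for every y ∈ ℝ, the posterior predictive density is a location-scale Student-t density: ∫₀^∞ ∫_{ℝ^D} N(y; θᵀφ, τ⁻¹) · NG(θ, τ; μ, Λ, α, β) dθ dτ = T(y; 2α, μᵀφ, (β/α)·(φᵀΛ⁻¹φ + 1)). -/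
open Real MeasureTheory Matrix

/-! Conditionally on the precision `τ`, the response `y = θ ⬝ᵥ φ + ε` is linear in the Gaussian
parameter `θ`, so integrating `θ` out leaves a Gaussian `y ~ N(μ ⬝ᵥ φ, (1 + φ ⬝ᵥ Λ⁻¹ *ᵥ φ) / τ)`:
completing the square in `θ` (with the matrix determinant lemma for the normalising constant)
writes the product of the two Gaussian densities as this marginal times a normalised Gaussian
density in `θ`. Integrating a Gaussian with variance `v / τ` against the Gamma density of `τ` is
then Euler's integral `∫ τ ^ (α - 1 / 2) * exp (-r τ) dτ = Γ(α + 1 / 2) / r ^ (α + 1 / 2)` with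
`r = β + (y - m) ^ 2 / (2 v)`, which is the Student-t density with `2 α` degrees of freedom. -/

theorem integral_exp_neg_mul_dotProduct_self {ι : Type*} [Fintype ι] {b : ℝ} (hb : 0 < b) :
    ∫ u : ι → ℝ, exp (-b * (u ⬝ᵥ u)) = (π / b) ^ ((Fintype.card ι : ℝ) / 2) := by
  have hnorm (v : EuclideanSpace ℝ ι) : v.ofLp ⬝ᵥ v.ofLp = ‖v‖ ^ 2 := by
    rw [EuclideanSpace.norm_eq, sq_sqrt (by positivity)]
    simp [dotProduct, sq]
  rw [← (EuclideanSpace.volume_preserving_symm_measurableEquiv_toLp ι).integral_comp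
    (MeasurableEquiv.toLp 2 (ι → ℝ)).symm.measurableEmbedding]
  simp only [MeasurableEquiv.toLp_symm_apply, hnorm]
  rw [GaussianFourier.integral_rexp_neg_mul_sq_norm hb, finrank_euclideanSpace]

namespace Matrix

section Field

variable {ι K : Type*} [Fintype ι] [DecidableEq ι] [Field K]

omit [DecidableEq ι] in
theorem IsSymm.dotProduct_mulVec_comm {A : Matrix ι ι K} (hA : A.IsSymm) (x y : ι → K) :
    x ⬝ᵥ A *ᵥ y = y ⬝ᵥ A *ᵥ x := by
  rw [dotProduct_mulVec, ← mulVec_transpose, hA.eq, dotProduct_comm]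

theorem det_add_vecMulVec {A : Matrix ι ι K} (hA : IsUnit A.det) (u w : ι → K) :
    (A + vecMulVec u w).det = A.det * (1 + w ⬝ᵥ A⁻¹ *ᵥ u) := by
  rw [vecMulVec_eq Unit, det_add_replicateCol_mul_replicateRow hA, Matrix.mul_assoc,
    ← replicateCol_mulVec, replicateRow_mul_replicateCol, det_unique (n := Unit)]
  rfl

theorem IsSymm.sq_div_add_dotProduct_mulVec_eq {P : Matrix ι ι K} (hP : P.IsSymm)
    (hPdet : IsUnit P.det) (φ : ι → K) {v : K} (hv : v ≠ 0) (hs : v + φ ⬝ᵥ P⁻¹ *ᵥ φ ≠ 0)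
    (c : K) (w : ι → K) :
    (c - w ⬝ᵥ φ) ^ 2 / v + w ⬝ᵥ P *ᵥ w =
      (w - (c / (v + φ ⬝ᵥ P⁻¹ *ᵥ φ)) • P⁻¹ *ᵥ φ) ⬝ᵥ (P + v⁻¹ • vecMulVec φ φ) *ᵥ
          (w - (c / (v + φ ⬝ᵥ P⁻¹ *ᵥ φ)) • P⁻¹ *ᵥ φ) +
        c ^ 2 / (v + φ ⬝ᵥ P⁻¹ *ᵥ φ) := by
  set k := φ ⬝ᵥ P⁻¹ *ᵥ φ
  set A := P + v⁻¹ • vecMulVec φ φ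
  set m := (c / (v + k)) • P⁻¹ *ᵥ φ
  have hA : A.IsSymm := hP.add (IsSymm.smul (transpose_vecMulVec φ φ) _)
  have hAx (x : ι → K) : A *ᵥ x = P *ᵥ x + (v⁻¹ * (φ ⬝ᵥ x)) • φ := by
    simp [A, add_mulVec, smul_mulVec, vecMulVec_mulVec, smul_smul, mul_comm]
  have hAm : A *ᵥ m = (c / v) • φ := by
    rw [hAx, mulVec_smul, mulVec_mulVec, mul_nonsing_inv _ hPdet, one_mulVec, dotProduct_smul,
      ← add_smul, smul_eq_mul]
    congr 1
    field_simp
    ring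
  have hmφ : m ⬝ᵥ φ = c / (v + k) * k := by
    rw [smul_dotProduct, dotProduct_comm]
    rfl
  rw [mulVec_sub, dotProduct_sub, sub_dotProduct, sub_dotProduct,
    hA.dotProduct_mulVec_comm m w, hAm, hAx, dotProduct_add]
  simp only [dotProduct_smul, smul_eq_mul, hmφ]
  rw [dotProduct_comm φ w]
  field_simp
  ring

end Field

variable {ι : Type*} [Fintype ι] [DecidableEq ι]

theorem integral_comp_mulVec {E : Type*} [NormedAddCommGroup E] [NormedSpace ℝ E]
    {B : Matrix ι ι ℝ} (hB : B.det ≠ 0) (f : (ι → ℝ) → E) :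
    ∫ x, f (B *ᵥ x) = |B.det|⁻¹ • ∫ u, f u := by
  have hinj : Function.Injective (toLin' B) :=
    mulVec_injective_iff_isUnit.2 ((isUnit_iff_isUnit_det B).2 (isUnit_iff_ne_zero.2 hB))
  have hemb := (toLin' B).isClosedEmbedding_of_injective (LinearMap.ker_eq_bot.2 hinj)
  rw [← abs_inv, ← ENNReal.toReal_ofReal (abs_nonneg _), ← integral_smul_measure,
    ← Real.map_matrix_volume_pi_eq_smul_volume_pi hB, hemb.integral_map]
  rfl

theorem PosDef.dotProduct_inv_mulVec_self_nonneg {P : Matrix ι ι ℝ} (hP : P.PosDef)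
    (φ : ι → ℝ) : 0 ≤ φ ⬝ᵥ P⁻¹ *ᵥ φ := by
  simpa using hP.inv.posSemidef.dotProduct_mulVec_nonneg φ

open scoped MatrixOrder in
theorem PosDef.integral_exp_neg_mul_dotProduct_mulVec {A : Matrix ι ι ℝ} (hA : A.PosDef)
    {b : ℝ} (hb : 0 < b) :
    ∫ x : ι → ℝ, exp (-b * (x ⬝ᵥ A *ᵥ x)) =
      (π / b) ^ ((Fintype.card ι : ℝ) / 2) / √A.det := by
  set B := CFC.sqrt A
  have hBB : B * B = A := CFC.sqrt_mul_sqrt_self A hA.posSemidef.nonneg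
  have hBsymm : Bᵀ = B := by
    simpa [conjTranspose_eq_transpose_of_trivial] using
      (CFC.sqrt_nonneg A).posSemidef.isHermitian.eq
  have hdet : B.det * B.det = A.det := by rw [← det_mul, hBB]
  have hB0 : B.det ≠ 0 := fun h => hA.det_pos.ne' (by rw [← hdet, h, mul_zero])
  have hquad (x : ι → ℝ) : x ⬝ᵥ A *ᵥ x = (B *ᵥ x) ⬝ᵥ (B *ᵥ x) := by
    rw [← hBB, ← mulVec_mulVec, dotProduct_mulVec, ← mulVec_transpose, hBsymm]
  simp only [hquad]
  rw [integral_comp_mulVec hB0 (fun u => exp (-b * (u ⬝ᵥ u))),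
    integral_exp_neg_mul_dotProduct_self hb, ← hdet, sqrt_mul_self_eq_abs, smul_eq_mul,
    inv_mul_eq_div]

theorem PosDef.integral_gaussND {A : Matrix ι ι ℝ} (hA : A.PosDef) (μ : ι → ℝ) :
    ∫ θ, gaussND θ μ A = 1 := by
  simp only [gaussND]
  rw [integral_const_mul, integral_sub_right_eq_self (fun x => exp (-(1 / 2) * (x ⬝ᵥ A *ᵥ x))),
    hA.integral_exp_neg_mul_dotProduct_mulVec one_half_pos, ← sqrt_eq_rpow, div_div_eq_mul_div,
    div_one, mul_comm π 2, neg_div, rpow_neg (by positivity)]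
  have := sqrt_pos.2 hA.det_pos
  field_simp

theorem PosDef.gauss1_dotProduct_mul_gaussND {P : Matrix ι ι ℝ} (hP : P.PosDef)
    (φ μ : ι → ℝ) {v : ℝ} (hv : 0 < v) (y : ℝ) (θ : ι → ℝ) :
    gauss1 y (θ ⬝ᵥ φ) v * gaussND θ μ P =
      gauss1 y (μ ⬝ᵥ φ) (v + φ ⬝ᵥ P⁻¹ *ᵥ φ) *
        gaussND θ (μ + ((y - μ ⬝ᵥ φ) / (v + φ ⬝ᵥ P⁻¹ *ᵥ φ)) • P⁻¹ *ᵥ φ)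
          (P + v⁻¹ • vecMulVec φ φ) := by
  have hPdet : IsUnit P.det := isUnit_iff_ne_zero.2 hP.det_pos.ne'
  set k := φ ⬝ᵥ P⁻¹ *ᵥ φ with hk_def
  have hs : 0 < v + k := by linarith [hP.dotProduct_inv_mulVec_self_nonneg φ]
  have hdet : (P + v⁻¹ • vecMulVec φ φ).det = P.det * ((v + k) / v) := by
    rw [← smul_vecMulVec, det_add_vecMulVec hPdet, mulVec_smul, dotProduct_smul, smul_eq_mul]
    field_simp
    rfl
  have hsq := (isHermitian_iff_isSymm.1 hP.isHermitian).sq_div_add_dotProduct_mulVec_eq hPdet φ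
    hv.ne' hs.ne' (y - μ ⬝ᵥ φ) (θ - μ)
  rw [sub_dotProduct, sub_sub_sub_cancel_right, sub_sub, ← hk_def] at hsq
  have hprefactor : (2 * π * v) ^ (-(1 : ℝ) / 2) * P.det ^ ((1 : ℝ) / 2) =
      (2 * π * (v + k)) ^ (-(1 : ℝ) / 2) * (P.det * ((v + k) / v)) ^ ((1 : ℝ) / 2) := by
    rw [neg_div, rpow_neg (by positivity), rpow_neg (by positivity)]
    simp only [← sqrt_eq_rpow]
    rw [sqrt_mul' _ hv.le, sqrt_mul' _ hs.le, sqrt_mul hP.det_pos.le, sqrt_div' _ hv.le]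
    have := sqrt_pos.2 hv
    have := sqrt_pos.2 hs
    field_simp
  have hexp : exp (-(y - θ ⬝ᵥ φ) ^ 2 / (2 * v)) * exp (-(1 / 2) * ((θ - μ) ⬝ᵥ P *ᵥ (θ - μ))) =
      exp (-(y - μ ⬝ᵥ φ) ^ 2 / (2 * (v + k))) *
        exp (-(1 / 2) * ((θ - (μ + ((y - μ ⬝ᵥ φ) / (v + k)) • P⁻¹ *ᵥ φ)) ⬝ᵥ
          (P + v⁻¹ • vecMulVec φ φ) *ᵥ (θ - (μ + ((y - μ ⬝ᵥ φ) / (v + k)) • P⁻¹ *ᵥ φ)))) := by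
    rw [← exp_add, ← exp_add, div_mul_eq_div_div_swap, div_mul_eq_div_div_swap]
    congr 1
    linear_combination (-(1 / 2 : ℝ)) * hsq
  simp only [gauss1, gaussND, hdet]
  calc _ = ((2 * π * v) ^ (-(1 : ℝ) / 2) * P.det ^ ((1 : ℝ) / 2)) *
        (2 * π) ^ (-(Fintype.card ι : ℝ) / 2) * (exp (-(y - θ ⬝ᵥ φ) ^ 2 / (2 * v)) *
          exp (-(1 / 2) * ((θ - μ) ⬝ᵥ P *ᵥ (θ - μ)))) := by ring
    _ = _ := by rw [hprefactor, hexp]; ring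

theorem PosDef.integral_gauss1_dotProduct_mul_gaussND {P : Matrix ι ι ℝ} (hP : P.PosDef)
    (φ μ : ι → ℝ) {v : ℝ} (hv : 0 < v) (y : ℝ) :
    ∫ θ, gauss1 y (θ ⬝ᵥ φ) v * gaussND θ μ P = gauss1 y (μ ⬝ᵥ φ) (v + φ ⬝ᵥ P⁻¹ *ᵥ φ) := by
  have hA : (P + v⁻¹ • vecMulVec φ φ).PosDef :=
    hP.add_posSemidef ((posSemidef_vecMulVec_self_star φ).smul (inv_nonneg.2 hv.le))
  simp only [hP.gauss1_dotProduct_mul_gaussND φ μ hv y]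
  rw [integral_const_mul, hA.integral_gaussND, mul_one]

end Matrix

theorem gauss1_div_mul_gammaPdf {τ v : ℝ} (hτ : 0 < τ) (hv : 0 ≤ v) (y m α β : ℝ) :
    gauss1 y m (v / τ) * gammaPdf τ α β =
      (2 * π * v) ^ (-(1 : ℝ) / 2) * β ^ α / Gamma α *
        (τ ^ ((α + 1 / 2) - 1) * exp (-((β + (y - m) ^ 2 / (2 * v)) * τ))) := by
  have hpow : τ ^ ((α + 1 / 2) - 1) = τ ^ (α - 1) * τ ^ ((1 : ℝ) / 2) := by
    rw [← rpow_add hτ]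
    ring_nf
  have hexp : exp (-((β + (y - m) ^ 2 / (2 * v)) * τ)) =
      exp (-(y - m) ^ 2 / (2 * (v / τ))) * exp (-β * τ) := by
    rw [← exp_add]
    congr 1
    field_simp
    ring
  have hpre : (2 * π * (v / τ)) ^ (-(1 : ℝ) / 2) =
      (2 * π * v) ^ (-(1 : ℝ) / 2) * τ ^ ((1 : ℝ) / 2) := by
    rw [mul_div_assoc', div_rpow (by positivity) hτ.le, div_eq_mul_inv, ← rpow_neg hτ.le]
    norm_num
  rw [gauss1, gammaPdf, hpow, hexp, hpre]
  ring

theorem integral_gauss1_div_mul_gammaPdf {α β v : ℝ} (hα : 0 < α) (hβ : 0 < β) (hv : 0 < v)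
    (y m : ℝ) :
    ∫ τ in Set.Ioi 0, gauss1 y m (v / τ) * gammaPdf τ α β =
      studentT y (2 * α) m (β / α * v) := by
  set r := β + (y - m) ^ 2 / (2 * v) with hr_def
  have hr : 0 < r := by positivity
  rw [setIntegral_congr_fun measurableSet_Ioi fun τ hτ => gauss1_div_mul_gammaPdf hτ hv.le y m α β,
    integral_const_mul, integral_rpow_mul_exp_neg_mul_Ioi (by positivity) hr]
  have hbase : 1 + (y - m) ^ 2 / (2 * α * (β / α * v)) = r / β := by
    rw [hr_def]
    field_simp
  have hscale : π * (2 * α) * (β / α * v) = 2 * π * v * β := by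
    field_simp
  have hrβ : (r / β) ^ (-(α + 1 / 2)) = β ^ α * β ^ ((1 : ℝ) / 2) / r ^ (α + 1 / 2) := by
    rw [rpow_neg (by positivity), div_rpow hr.le hβ.le, inv_div, rpow_add hβ]
  rw [studentT, show (2 * α + 1) / 2 = α + 1 / 2 by ring, show 2 * α / 2 = α by ring, hbase,
    hscale, hrβ, one_div, inv_rpow hr.le, sqrt_mul (by positivity), sqrt_eq_rpow β, neg_div,
    rpow_neg (by positivity), ← sqrt_eq_rpow]
  have := Gamma_pos_of_pos hα
  field_simp

theorem posterior_predictive_is_studentT_general (D : ℕ) (φ μ : Fin D → ℝ)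
    (Λ : Matrix (Fin D) (Fin D) ℝ) (hΛ : Λ.PosDef) (α β : ℝ) (hα : 0 < α) (hβ : 0 < β)
    (y : ℝ) :
    (∫ τ in Set.Ioi (0 : ℝ), ∫ θ : Fin D → ℝ,
        gauss1 y (θ ⬝ᵥ φ) τ⁻¹ * normalGamma θ τ μ Λ α β) =
      studentT y (2 * α) (μ ⬝ᵥ φ) ((β / α) * (φ ⬝ᵥ (Λ⁻¹ *ᵥ φ) + 1)) := by
  have hmarginal : ∀ τ ∈ Set.Ioi (0 : ℝ),
      ∫ θ, gauss1 y (θ ⬝ᵥ φ) τ⁻¹ * normalGamma θ τ μ Λ α β =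
        gauss1 y (μ ⬝ᵥ φ) ((φ ⬝ᵥ Λ⁻¹ *ᵥ φ + 1) / τ) * gammaPdf τ α β := by
    intro τ (hτ : 0 < τ)
    have hinv : (τ • Λ)⁻¹ = τ⁻¹ • Λ⁻¹ :=
      inv_smul' Λ (Units.mk0 τ hτ.ne') (isUnit_iff_ne_zero.2 hΛ.det_pos.ne')
    simp only [normalGamma, ← mul_assoc]
    rw [integral_mul_const, (hΛ.smul hτ).integral_gauss1_dotProduct_mul_gaussND φ μ (inv_pos.2 hτ),
      hinv, smul_mulVec, dotProduct_smul, smul_eq_mul]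
    congr 2
    field_simp
    ring
  rw [setIntegral_congr_fun measurableSet_Ioi hmarginal, integral_gauss1_div_mul_gammaPdf hα hβ
    (by linarith [hΛ.dotProduct_inv_mulVec_self_nonneg φ])]

/-- the posterior predictive density of the Gaussian NARX likelihood under a
Normal-Gamma distribution on (θ, τ) is a location-scale Student-t density. -/
theorem posterior_predictive_is_studentT (D : ℕ) (hD : 1 ≤ D) (φ μ : Fin D → ℝ)
    (Λ : Matrix (Fin D) (Fin D) ℝ) (hΛ : Λ.PosDef) (α β : ℝ) (hα : 0 < α) (hβ : 0 < β)
    (y : ℝ) :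
    (∫ τ in Set.Ioi (0 : ℝ), ∫ θ : Fin D → ℝ,
        gauss1 y (θ ⬝ᵥ φ) τ⁻¹ * normalGamma θ τ μ Λ α β) =
      studentT y (2 * α) (μ ⬝ᵥ φ) ((β / α) * (φ ⬝ᵥ (Λ⁻¹ *ᵥ φ) + 1)) :=
  posterior_predictive_is_studentT_general D φ μ Λ hΛ α β hα hβ y
end

section
/- Let D ≥ 1, let μ, φ ∈ ℝ^D, ŷ ∈ ℝ, let Λ be a symmetric positive definite D×D real matrix, set Λ₁ = Λ + φφᵀ and ξ = Λμ + φŷ. Then ŷ² + μᵀΛμ − ξᵀΛ₁⁻¹ξ ≥ 0. Consequently, in the Bayesian update β₁ = β₀ + (1/2)(ŷ² − μ₁ᵀΛ₁μ₁ + μ₀ᵀΛ₀μ₀) of the Normal-Gamma rate parameter, the rate parameter never decreases: β₁ ≥ β₀. -/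
open Real MeasureTheory Matrix

/-! Any solution `x` of `(φφᵀ + Λ) x = ξ` completes the square:
`ŷ² + μᵀΛμ − ξᵀx = (ŷ − φᵀx)² + (μ − x)ᵀΛ(μ − x) ≥ 0`.
For `x = Λ₁⁻¹ξ = μ₁` we have `μ₁ᵀΛ₁μ₁ = ξᵀμ₁`, so `β₁ − β₀` is half this nonnegative residual. -/

section

variable {ι : Type*} [Fintype ι]

theorem vecMulVec_self_mulVec (φ x : ι → ℝ) : vecMulVec φ φ *ᵥ x = (φ ⬝ᵥ x) • φ := by
  ext i
  simp [vecMulVec_mulVec, mul_comm]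

theorem dotProduct_mulVec_comm_of_isHermitian {Λ : Matrix ι ι ℝ} (hΛ : Λ.IsHermitian)
    (u v : ι → ℝ) : u ⬝ᵥ (Λ *ᵥ v) = v ⬝ᵥ (Λ *ᵥ u) := by
  rw [dotProduct_mulVec, ← mulVec_transpose, ← conjTranspose_eq_transpose_of_trivial, hΛ,
    dotProduct_comm]

theorem sq_add_dotProduct_mulVec_sub_eq {Λ : Matrix ι ι ℝ} (hΛ : Λ.IsHermitian)
    {μ φ x : ι → ℝ} {y : ℝ} (hx : (vecMulVec φ φ + Λ) *ᵥ x = Λ *ᵥ μ + y • φ) :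
    y ^ 2 + μ ⬝ᵥ (Λ *ᵥ μ) - (Λ *ᵥ μ + y • φ) ⬝ᵥ x =
      (y - φ ⬝ᵥ x) ^ 2 + (μ - x) ⬝ᵥ (Λ *ᵥ (μ - x)) := by
  have hquad : x ⬝ᵥ (Λ *ᵥ μ + y • φ) = (φ ⬝ᵥ x) ^ 2 + x ⬝ᵥ (Λ *ᵥ x) := by
    rw [← hx, add_mulVec, dotProduct_add, vecMulVec_self_mulVec, dotProduct_smul, smul_eq_mul,
      dotProduct_comm x φ, sq]
  have hlin : x ⬝ᵥ (Λ *ᵥ μ + y • φ) = μ ⬝ᵥ (Λ *ᵥ x) + y * (φ ⬝ᵥ x) := by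
    rw [dotProduct_add, dotProduct_smul, smul_eq_mul, dotProduct_comm x φ,
      dotProduct_mulVec_comm_of_isHermitian hΛ]
  have hsplit : (μ - x) ⬝ᵥ (Λ *ᵥ (μ - x)) =
      μ ⬝ᵥ (Λ *ᵥ μ) - 2 * μ ⬝ᵥ (Λ *ᵥ x) + x ⬝ᵥ (Λ *ᵥ x) := by
    rw [mulVec_sub, sub_dotProduct, dotProduct_sub, dotProduct_sub,
      dotProduct_mulVec_comm_of_isHermitian hΛ x μ]
    ring
  rw [hsplit, dotProduct_comm _ x]
  linear_combination hquad - 2 * hlin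

theorem sq_add_dotProduct_mulVec_sub_nonneg {Λ : Matrix ι ι ℝ} (hΛ : Λ.PosSemidef)
    {μ φ x : ι → ℝ} {y : ℝ} (hx : (vecMulVec φ φ + Λ) *ᵥ x = Λ *ᵥ μ + y • φ) :
    0 ≤ y ^ 2 + μ ⬝ᵥ (Λ *ᵥ μ) - (Λ *ᵥ μ + y • φ) ⬝ᵥ x := by
  rw [sq_add_dotProduct_mulVec_sub_eq hΛ.isHermitian hx]
  have hΛ_nonneg := hΛ.dotProduct_mulVec_nonneg (μ - x)
  rw [star_trivial] at hΛ_nonneg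
  positivity

theorem Matrix.PosDef.vecMulVec_self_add {Λ : Matrix ι ι ℝ} (hΛ : Λ.PosDef) (φ : ι → ℝ) :
    (vecMulVec φ φ + Λ).PosDef := by
  simpa using PosDef.posSemidef_add (posSemidef_vecMulVec_self_star φ) hΛ

end

theorem rate_parameter_nondecreasing_general (D : ℕ) (μ₀ φ : Fin D → ℝ) (yhat : ℝ)
    (Λ₀ : Matrix (Fin D) (Fin D) ℝ) (hΛ₀ : Λ₀.PosDef) (β₀ : ℝ) :
    let Λ₁ : Matrix (Fin D) (Fin D) ℝ := vecMulVec φ φ + Λ₀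
    let μ₁ : Fin D → ℝ := Λ₁⁻¹ *ᵥ (yhat • φ + Λ₀ *ᵥ μ₀)
    let ξ : Fin D → ℝ := Λ₀ *ᵥ μ₀ + yhat • φ
    0 ≤ yhat ^ 2 + μ₀ ⬝ᵥ (Λ₀ *ᵥ μ₀) - ξ ⬝ᵥ (Λ₁⁻¹ *ᵥ ξ) ∧
      β₀ ≤ β₀ + (1 / 2) * (yhat ^ 2 - μ₁ ⬝ᵥ (Λ₁ *ᵥ μ₁) + μ₀ ⬝ᵥ (Λ₀ *ᵥ μ₀)) := by
  intro Λ₁ μ₁ ξ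
  have hdet : IsUnit Λ₁.det := (hΛ₀.vecMulVec_self_add φ).det_pos.ne'.isUnit
  have hsolve : Λ₁ *ᵥ (Λ₁⁻¹ *ᵥ ξ) = ξ := by
    rw [mulVec_mulVec, mul_nonsing_inv _ hdet, one_mulVec]
  have hμ₁ : μ₁ = Λ₁⁻¹ *ᵥ ξ := congrArg (Λ₁⁻¹ *ᵥ ·) (add_comm _ _)
  have hresidual := sq_add_dotProduct_mulVec_sub_nonneg hΛ₀.posSemidef hsolve
  refine ⟨hresidual, ?_⟩
  rw [hμ₁, hsolve, dotProduct_comm]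
  linarith

/-- the rate parameter of the Normal-Gamma distribution never decreases
in the Bayesian update. -/
theorem rate_parameter_nondecreasing (D : ℕ) (hD : 1 ≤ D) (μ₀ φ : Fin D → ℝ) (yhat : ℝ)
    (Λ₀ : Matrix (Fin D) (Fin D) ℝ) (hΛ₀ : Λ₀.PosDef) (β₀ : ℝ) (hβ₀ : 0 < β₀) :
    let Λ₁ : Matrix (Fin D) (Fin D) ℝ := vecMulVec φ φ + Λ₀
    let μ₁ : Fin D → ℝ := Λ₁⁻¹ *ᵥ (yhat • φ + Λ₀ *ᵥ μ₀)
    let ξ : Fin D → ℝ := Λ₀ *ᵥ μ₀ + yhat • φ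
    0 ≤ yhat ^ 2 + μ₀ ⬝ᵥ (Λ₀ *ᵥ μ₀) - ξ ⬝ᵥ (Λ₁⁻¹ *ᵥ ξ) ∧
      β₀ ≤ β₀ + (1 / 2) * (yhat ^ 2 - μ₁ ⬝ᵥ (Λ₁ *ᵥ μ₁) + μ₀ ⬝ᵥ (Λ₀ *ᵥ μ₀)) :=
  rate_parameter_nondecreasing_general D μ₀ φ yhat Λ₀ hΛ₀ β₀
end

section
/- Let ν > 2, s² > 0, v* > 0, and m, m* ∈ ℝ. Then the cross-entropy of the location-scale Student-t density relative to the Gaussian log-loss evaluates to: ∫_ℝ T(y; ν, m, s²) · (−ln N(y; m*, v*)) dy = (1/2)·ln(2πv*) + (1/(2v*))·((m − m*)² + s²·ν/(ν − 2)). -/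
open Real MeasureTheory Matrix

/-!
Substituting `y = m + √(ν s²) u` turns the Student-t density into a multiple of
`(1 + u²)^(-p)` with `p = (ν + 1)/2`, and `∫ (1 + u²)^(-p) = B(1/2, p - 1/2)` by the
substitution `x = u²` followed by `x = t/(1 - t)`. Since `-log N(y; m*, v*)` is a quadratic
polynomial in `y`, the cross-entropy is a combination of the first three central moments
`1`, `0`, `s²ν/(ν - 2)` of the Student-t distribution. The variance comes from
`u²(1 + u²)^(-p) = (1 + u²)^(-(p - 1)) - (1 + u²)^(-p)` and `Γ(x + 1) = x Γ(x)`.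
-/

open Set

theorem integral_Ioo_rpow_mul_one_sub_rpow {a b : ℝ} (ha : 0 < a) (hb : 0 < b) :
    ∫ x in Ioo (0 : ℝ) 1, x ^ (a - 1) * (1 - x) ^ (b - 1) = betaFn a b := by
  have hcomplex : Complex.betaIntegral a b =
      ↑(∫ x in (0 : ℝ)..1, x ^ (a - 1) * (1 - x) ^ (b - 1)) := by
    rw [Complex.betaIntegral, ← intervalIntegral.integral_ofReal]
    refine intervalIntegral.integral_congr fun x hx => ?_
    rw [uIcc_of_le zero_le_one] at hx
    simp only [Complex.ofReal_mul, Complex.ofReal_cpow hx.1,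
      Complex.ofReal_cpow (sub_nonneg.2 hx.2)]
    push_cast
    rfl
  rw [intervalIntegral.integral_of_le zero_le_one, integral_Ioc_eq_integral_Ioo] at hcomplex
  rw [Complex.betaIntegral_eq_Gamma_mul_div _ _ (by simpa) (by simpa), ← Complex.ofReal_add,
    Complex.Gamma_ofReal, Complex.Gamma_ofReal, Complex.Gamma_ofReal] at hcomplex
  exact_mod_cast hcomplex.symm

theorem integral_Ioi_rpow_mul_one_add_rpow_neg {a p : ℝ} (ha : 0 < a) (hap : a < p) :
    ∫ x in Ioi (0 : ℝ), x ^ (a - 1) * (1 + x) ^ (-p) = betaFn a (p - a) := by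
  set f : ℝ → ℝ := fun t => t / (1 - t)
  have himage : f '' Ioo 0 1 = Ioi 0 := by
    ext x
    refine ⟨?_, fun (hx : 0 < x) =>
      ⟨x / (1 + x), ⟨by positivity, (div_lt_one (by positivity)).2 (by linarith)⟩, ?_⟩⟩
    · rintro ⟨t, ht, rfl⟩
      exact div_pos ht.1 (sub_pos.2 ht.2)
    · simp only [f]
      field_simp
      ring
  have hderiv : ∀ t ∈ Ioo (0 : ℝ) 1, HasDerivWithinAt f (1 / (1 - t) ^ 2) (Ioo 0 1) t := by
    intro t ht
    have h : 1 - t ≠ 0 := (sub_pos.2 ht.2).ne'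
    refine (((hasDerivAt_id' t).div ((hasDerivAt_const t 1).sub (hasDerivAt_id' t)) h
      ).hasDerivWithinAt).congr_deriv ?_
    simp only [Pi.sub_apply]
    field_simp
    ring
  have hinj : InjOn f (Ioo 0 1) := by
    intro x hx y hy hxy
    have hx1 : 1 - x ≠ 0 := (sub_pos.2 hx.2).ne'
    have hy1 : 1 - y ≠ 0 := (sub_pos.2 hy.2).ne'
    simp only [f] at hxy
    field_simp at hxy
    linarith
  have hintegrand : ∀ t ∈ Ioo (0 : ℝ) 1,
      |1 / (1 - t) ^ 2| • ((f t) ^ (a - 1) * (1 + f t) ^ (-p)) =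
        t ^ (a - 1) * (1 - t) ^ (p - a - 1) := by
    rintro t ⟨ht, ht1⟩
    have hs : 0 < 1 - t := sub_pos.2 ht1
    have hone_add : 1 + f t = (1 - t)⁻¹ := by simp only [f]; field_simp; ring
    rw [hone_add, Real.div_rpow ht.le hs.le, Real.inv_rpow hs.le, ← Real.rpow_neg hs.le, neg_neg,
      abs_of_pos (by positivity), smul_eq_mul, ← Real.rpow_natCast,
      show p - a - 1 = p - (a - 1) - (2 : ℕ) by push_cast; ring, Real.rpow_sub hs,
      Real.rpow_sub hs]
    field_simp
    rw [← Real.rpow_add hs, ← Real.rpow_add hs]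
    ring_nf
  rw [← himage, integral_image_eq_integral_abs_deriv_smul measurableSet_Ioo hderiv hinj,
    setIntegral_congr_fun measurableSet_Ioo hintegrand,
    integral_Ioo_rpow_mul_one_sub_rpow ha (sub_pos.2 hap)]

theorem integral_one_add_sq_rpow_neg {p : ℝ} (hp : 1 / 2 < p) :
    ∫ u : ℝ, (1 + u ^ 2) ^ (-p) = √π * Real.Gamma (p - 1 / 2) / Real.Gamma p := by
  have hsubst := integral_comp_rpow_Ioi_of_pos two_pos
    (g := fun x : ℝ => x ^ ((1 / 2 : ℝ) - 1) * (1 + x) ^ (-p))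
  have hintegrand : ∀ x ∈ Ioi (0 : ℝ),
      ((2 : ℝ) * x ^ ((2 : ℝ) - 1)) •
          ((x ^ (2 : ℝ)) ^ ((1 / 2 : ℝ) - 1) * (1 + x ^ (2 : ℝ)) ^ (-p)) =
        2 * (1 + x ^ 2) ^ (-p) := by
    rintro x (hx : 0 < x)
    rw [← Real.rpow_mul hx.le, Real.rpow_two, smul_eq_mul]
    norm_num [Real.rpow_neg_one, hx.ne']
    field_simp
  rw [setIntegral_congr_fun measurableSet_Ioi hintegrand, integral_const_mul,
    integral_Ioi_rpow_mul_one_add_rpow_neg one_half_pos (by linarith)] at hsubst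
  have habs := integral_comp_abs (f := fun x : ℝ => (1 + x ^ 2) ^ (-p))
  simp only [sq_abs] at habs
  rw [habs, hsubst, betaFn, Real.Gamma_one_half_eq, add_sub_cancel]

theorem integrable_one_add_sq_rpow_neg {p : ℝ} (hp : 1 / 2 < p) :
    Integrable fun u : ℝ => (1 + u ^ 2) ^ (-p) := by
  have h := integrable_rpow_neg_one_add_norm_sq (E := ℝ) (μ := volume) (r := 2 * p)
    (by simp; linarith)
  simpa [show -(2 * p) / 2 = -p by ring] using h

theorem sq_mul_one_add_sq_rpow_neg (u p : ℝ) :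
    u ^ 2 * (1 + u ^ 2) ^ (-p) = (1 + u ^ 2) ^ (-(p - 1)) - (1 + u ^ 2) ^ (-p) := by
  have h : (0 : ℝ) < 1 + u ^ 2 := by positivity
  rw [show -(p - 1) = 1 + -p by ring, Real.rpow_add h, Real.rpow_one]
  ring

theorem integrable_sq_mul_one_add_sq_rpow_neg {p : ℝ} (hp : 3 / 2 < p) :
    Integrable fun u : ℝ => u ^ 2 * (1 + u ^ 2) ^ (-p) := by
  simp only [sq_mul_one_add_sq_rpow_neg]
  exact (integrable_one_add_sq_rpow_neg (by linarith)).sub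
    (integrable_one_add_sq_rpow_neg (by linarith))

theorem integral_sq_mul_one_add_sq_rpow_neg {p : ℝ} (hp : 3 / 2 < p) :
    ∫ u : ℝ, u ^ 2 * (1 + u ^ 2) ^ (-p) =
      √π * Real.Gamma (p - 3 / 2) / (2 * Real.Gamma p) := by
  simp only [sq_mul_one_add_sq_rpow_neg]
  rw [integral_sub (integrable_one_add_sq_rpow_neg (by linarith))
    (integrable_one_add_sq_rpow_neg (by linarith)), integral_one_add_sq_rpow_neg (by linarith),
    integral_one_add_sq_rpow_neg (by linarith)]
  have hΓ₁ : Real.Gamma p = (p - 1) * Real.Gamma (p - 1) := by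
    rw [← Real.Gamma_add_one (by linarith), sub_add_cancel]
  have hΓ₂ : Real.Gamma (p - 1 / 2) = (p - 3 / 2) * Real.Gamma (p - 3 / 2) := by
    rw [← Real.Gamma_add_one (by linarith)]; ring_nf
  have hp1 : p - 1 ≠ 0 := by linarith
  rw [hΓ₁, hΓ₂, show p - 1 - 1 / 2 = p - 3 / 2 by ring]
  field_simp
  ring

theorem integrable_mul_one_add_sq_rpow_neg {p : ℝ} (hp : 1 < p) :
    Integrable fun u : ℝ => u * (1 + u ^ 2) ^ (-p) := by
  refine (integrable_one_add_sq_rpow_neg (p := p - 1 / 2) (by linarith)).mono'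
    (by fun_prop) (Filter.Eventually.of_forall fun u => ?_)
  have h : (0 : ℝ) < 1 + u ^ 2 := by positivity
  have habs : |u| ≤ (1 + u ^ 2) ^ (1 / 2 : ℝ) := by
    rw [← Real.sqrt_eq_rpow, ← Real.sqrt_sq_eq_abs]
    exact Real.sqrt_le_sqrt (by linarith)
  rw [norm_mul, Real.norm_eq_abs, Real.norm_of_nonneg (by positivity),
    show -(p - 1 / 2) = 1 / 2 + -p by ring, Real.rpow_add h]
  gcongr

theorem integral_mul_one_add_sq_rpow_neg (p : ℝ) : ∫ u : ℝ, u * (1 + u ^ 2) ^ (-p) = 0 := by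
  have h := integral_neg_eq_self (fun u : ℝ => u * (1 + u ^ 2) ^ (-p)) volume
  simp only [neg_sq, neg_mul, integral_neg] at h
  linarith

section StudentT

variable {ν s2 : ℝ}

theorem sub_pow_mul_studentT (k : ℕ) (y m : ℝ) (h : 0 < ν * s2) :
    (y - m) ^ k * studentT y ν m s2 =
      √(ν * s2) ^ k * (Real.Gamma ((ν + 1) / 2) / (√(π * ν * s2) * Real.Gamma (ν / 2))) *
        (((y - m) / √(ν * s2)) ^ k *
          (1 + ((y - m) / √(ν * s2)) ^ 2) ^ (-((ν + 1) / 2))) := by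
  rw [studentT, div_pow, div_pow, Real.sq_sqrt h.le]
  field_simp

theorem integrable_sub_pow_mul_studentT (k : ℕ) (m : ℝ) (h : 0 < ν * s2)
    (hk : Integrable fun u : ℝ => u ^ k * (1 + u ^ 2) ^ (-((ν + 1) / 2))) :
    Integrable fun y => (y - m) ^ k * studentT y ν m s2 := by
  simp_rw [sub_pow_mul_studentT k _ m h]
  exact ((hk.comp_div (Real.sqrt_pos.2 h).ne').comp_sub_right m).const_mul _

theorem integral_sub_pow_mul_studentT (k : ℕ) (m : ℝ) (h : 0 < ν * s2) :
    ∫ y, (y - m) ^ k * studentT y ν m s2 =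
      √(ν * s2) ^ k * Real.Gamma ((ν + 1) / 2) / (√π * Real.Gamma (ν / 2)) *
        ∫ u : ℝ, u ^ k * (1 + u ^ 2) ^ (-((ν + 1) / 2)) := by
  have ha : 0 < √(ν * s2) := Real.sqrt_pos.2 h
  simp_rw [sub_pow_mul_studentT k _ m h]
  rw [integral_const_mul, integral_sub_right_eq_self
      (fun y => (y / √(ν * s2)) ^ k * (1 + (y / √(ν * s2)) ^ 2) ^ (-((ν + 1) / 2))) m,
    Measure.integral_comp_div (fun u => u ^ k * (1 + u ^ 2) ^ (-((ν + 1) / 2))), smul_eq_mul,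
    abs_of_pos ha, mul_assoc π, Real.sqrt_mul pi_pos.le]
  field_simp

theorem integrable_studentT (m : ℝ) (hν : 0 < ν) (hs2 : 0 < s2) :
    Integrable fun y => studentT y ν m s2 := by
  simpa using integrable_sub_pow_mul_studentT 0 m (mul_pos hν hs2)
    (by simpa using integrable_one_add_sq_rpow_neg (by linarith))

theorem integral_studentT (m : ℝ) (hν : 0 < ν) (hs2 : 0 < s2) :
    ∫ y, studentT y ν m s2 = 1 := by
  have h := integral_sub_pow_mul_studentT 0 m (mul_pos hν hs2)
  simp only [pow_zero, one_mul] at h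
  rw [h, integral_one_add_sq_rpow_neg (by linarith), show (ν + 1) / 2 - 1 / 2 = ν / 2 by ring]
  field_simp

theorem integrable_sub_mul_studentT (m : ℝ) (hν : 1 < ν) (hs2 : 0 < s2) :
    Integrable fun y => (y - m) * studentT y ν m s2 := by
  simpa using integrable_sub_pow_mul_studentT 1 m (by positivity)
    (by simpa using integrable_mul_one_add_sq_rpow_neg (by linarith))

theorem integral_sub_mul_studentT (m : ℝ) (h : 0 < ν * s2) :
    ∫ y, (y - m) * studentT y ν m s2 = 0 := by
  simpa [integral_mul_one_add_sq_rpow_neg] using integral_sub_pow_mul_studentT 1 m h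

theorem integrable_sub_sq_mul_studentT (m : ℝ) (hν : 2 < ν) (hs2 : 0 < s2) :
    Integrable fun y => (y - m) ^ 2 * studentT y ν m s2 :=
  integrable_sub_pow_mul_studentT 2 m (by positivity)
    (integrable_sq_mul_one_add_sq_rpow_neg (by linarith))

theorem integral_sub_sq_mul_studentT (m : ℝ) (hν : 2 < ν) (hs2 : 0 < s2) :
    ∫ y, (y - m) ^ 2 * studentT y ν m s2 = s2 * ν / (ν - 2) := by
  rw [integral_sub_pow_mul_studentT 2 m (by positivity),
    integral_sq_mul_one_add_sq_rpow_neg (by linarith), Real.sq_sqrt (by positivity),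
    show (ν + 1) / 2 - 3 / 2 = ν / 2 - 1 by ring]
  have hΓ : Real.Gamma (ν / 2) = (ν / 2 - 1) * Real.Gamma (ν / 2 - 1) := by
    rw [← Real.Gamma_add_one (by linarith), sub_add_cancel]
  have h₁ : 0 < Real.Gamma (ν / 2 - 1) := Real.Gamma_pos_of_pos (by linarith)
  rw [hΓ]
  generalize Real.Gamma (ν / 2 - 1) = G at h₁
  field_simp

end StudentT

theorem neg_log_gauss1 (y m : ℝ) {v : ℝ} (hv : 0 < v) :
    -Real.log (gauss1 y m v) = Real.log (2 * π * v) / 2 + (y - m) ^ 2 / (2 * v) := by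
  rw [gauss1, Real.log_mul (by positivity) (Real.exp_ne_zero _), Real.log_rpow (by positivity),
    Real.log_exp]
  ring

/-- the cross-entropy of a location-scale Student-t density relative to a
Gaussian goal prior. -/
theorem studentT_gaussian_cross_entropy (ν s2 vstar m mstar : ℝ)
    (hν : 2 < ν) (hs2 : 0 < s2) (hv : 0 < vstar) :
    ∫ y : ℝ, studentT y ν m s2 * (-Real.log (gauss1 y mstar vstar)) =
      (1 / 2) * Real.log (2 * π * vstar) +
        (1 / (2 * vstar)) * ((m - mstar) ^ 2 + s2 * ν / (ν - 2)) := by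
  have hintegrand : ∀ y, studentT y ν m s2 * (-Real.log (gauss1 y mstar vstar)) =
      (Real.log (2 * π * vstar) / 2 + (m - mstar) ^ 2 / (2 * vstar)) * studentT y ν m s2 +
        ((m - mstar) / vstar) * ((y - m) * studentT y ν m s2) +
        (1 / (2 * vstar)) * ((y - m) ^ 2 * studentT y ν m s2) := by
    intro y
    rw [neg_log_gauss1 y mstar hv]
    field_simp
    ring
  have hν₀ : 0 < ν := by linarith
  have hν₁ : 1 < ν := by linarith
  have h₀ := (integrable_studentT m hν₀ hs2).const_mul
    (Real.log (2 * π * vstar) / 2 + (m - mstar) ^ 2 / (2 * vstar))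
  have h₁ := (integrable_sub_mul_studentT m hν₁ hs2).const_mul ((m - mstar) / vstar)
  have h₂ := (integrable_sub_sq_mul_studentT m hν hs2).const_mul (1 / (2 * vstar))
  simp_rw [hintegrand]
  rw [integral_add ?_ h₂, integral_add h₀ h₁, integral_const_mul, integral_const_mul,
    integral_const_mul, integral_studentT m hν₀ hs2,
    integral_sub_mul_studentT m (mul_pos hν₀ hs2), integral_sub_sq_mul_studentT m hν hs2]
  · ring
  · exact h₀.add h₁
end
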